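/- arXiv:1310.5665 — 4 statements merged into one kernel-verified Lean document; each statement's English description precedes it below -/
import Mathlib

section
/- The loss L decomposes as L = l1 + l2 where l1(r, b) = -b2·1{r < b2} - r·1{b2 ≤ r ≤ b1} - b1·1{r > b1} and l2(r, b) = b1·1{r > b1}; l1 is 1-Lipschitz in r and L = -Revenue. -/
/-!
On `[b2, b1]` the loss `l1` is `-r`, and it is constant (`-b2` below, `-b1` above) outside, so
`l1 r = -projIcc b2 b1 r` is minus the clamp of `r` to `[b2, b1]`; clamping is 1-Lipschitz. The
decomposition `L = l1 + l2` is a check on the three regions, in which `l2` cancels the term `-b1`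
of `l1` above `b1`.
-/

/-- Revenue of a second-price auction with reserve price `r` and bids `(b1, b2)`. -/
noncomputable def Revenue (r b1 b2 : ℝ) : ℝ :=
  (if r < b2 then b2 else 0) + (if b2 ≤ r ∧ r ≤ b1 then r else 0)

/-- The loss `L(r, b) = -Revenue(r, b)`. -/
noncomputable def Lloss (r b1 b2 : ℝ) : ℝ := -Revenue r b1 b2

/-- `l1(r, b) = -b2·1{r < b2} - r·1{b2 ≤ r ≤ b1} - b1·1{r > b1}`. -/
noncomputable def l1 (r b1 b2 : ℝ) : ℝ :=
  (if r < b2 then -b2 else 0) + (if b2 ≤ r ∧ r ≤ b1 then -r else 0)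
    + (if b1 < r then -b1 else 0)

/-- `l2(r, b) = b1·1{r > b1}`. -/
noncomputable def l2 (r b1 b2 : ℝ) : ℝ := if b1 < r then b1 else 0

open Set

lemma Lloss_eq_l1_add_l2 (r b1 b2 : ℝ) : Lloss r b1 b2 = l1 r b1 b2 + l2 r b1 b2 := by
  unfold Lloss Revenue l1 l2
  split_ifs <;> grind

lemma l1_eq_neg_projIcc {b1 b2 : ℝ} (hle : b2 ≤ b1) (r : ℝ) :
    l1 r b1 b2 = -(projIcc b2 b1 hle r : ℝ) := by
  rw [coe_projIcc]
  unfold l1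
  split_ifs <;> grind

lemma abs_l1_sub_l1_le {b1 b2 : ℝ} (hle : b2 ≤ b1) (r r' : ℝ) :
    |l1 r b1 b2 - l1 r' b1 b2| ≤ |r - r'| := by
  rw [l1_eq_neg_projIcc hle, l1_eq_neg_projIcc hle, neg_sub_neg, abs_sub_comm]
  exact abs_projIcc_sub_projIcc hle

theorem loss_decomposition_general (b1 b2 : ℝ) (hle : b2 ≤ b1) :
    (∀ r : ℝ, Lloss r b1 b2 = l1 r b1 b2 + l2 r b1 b2) ∧
    (∀ r r' : ℝ, |l1 r b1 b2 - l1 r' b1 b2| ≤ |r - r'|) :=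
  ⟨fun r => Lloss_eq_l1_add_l2 r b1 b2, abs_l1_sub_l1_le hle⟩

theorem loss_decomposition (b1 b2 : ℝ) (h0 : 0 ≤ b2) (hle : b2 ≤ b1) :
    (∀ r : ℝ, Lloss r b1 b2 = l1 r b1 b2 + l2 r b1 b2) ∧
    (∀ r r' : ℝ, |l1 r b1 b2 - l1 r' b1 b2| ≤ |r - r'|) :=
  loss_decomposition_general b1 b2 hle
end

section
/- (Talagrand-type contraction) Let H be a set of functions from X to ℝ, and let Ψ1, ..., Ψm be μ-Lipschitz functions ℝ → ℝ for some μ > 0. Then for any points x1, ..., xm ∈ X, E_σ[sup_{h∈H} (1/m)∑_{i=1}^m σ_i Ψ_i(h(x_i))] ≤ (μ/m)·E_σ[sup_{h∈H} ∑_{i=1}^m σ_i h(x_i)], where σ_i are independent Rademacher random variables. -/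
open Finset

/-- The real sign associated with a Boolean Rademacher variable. -/
def radSign (s : Bool) : ℝ := if s then 1 else -1

lemma radSign_not (b : Bool) : radSign (!b) = - radSign b := by
  cases b <;> simp [radSign]

lemma abs_radSign (b : Bool) : |radSign b| = 1 := by
  cases b <;> simp [radSign]

lemma core_ineq {α : Type*} (H : Set α) (hH : H.Nonempty) (a c : α → ℝ) (Φ : ℝ → ℝ) (μ : ℝ)
    (hLip : ∀ s t, |Φ s - Φ t| ≤ μ * |s - t|)
    (b1 : BddAbove ((fun h => a h + μ * c h) '' H))
    (b2 : BddAbove ((fun h => a h - μ * c h) '' H)) :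
    sSup ((fun h => a h + Φ (c h)) '' H) + sSup ((fun h => a h - Φ (c h)) '' H)
      ≤ sSup ((fun h => a h + μ * c h) '' H) + sSup ((fun h => a h - μ * c h) '' H) := by
  set R1 := sSup ((fun h => a h + μ * c h) '' H) with hR1
  set R2 := sSup ((fun h => a h - μ * c h) '' H) with hR2
  have key : ∀ h1 ∈ H, ∀ h2 ∈ H,
      (a h1 + Φ (c h1)) + (a h2 - Φ (c h2)) ≤ R1 + R2 := by
    intro h1 h1m h2 h2m
    have hd : Φ (c h1) - Φ (c h2) ≤ μ * |c h1 - c h2| := (le_abs_self _).trans (hLip _ _)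
    rcases le_total (c h2) (c h1) with hc | hc
    · have e1 : a h1 + μ * c h1 ≤ R1 := le_csSup b1 ⟨h1, h1m, rfl⟩
      have e2 : a h2 - μ * c h2 ≤ R2 := le_csSup b2 ⟨h2, h2m, rfl⟩
      rw [abs_of_nonneg (by linarith), mul_sub] at hd
      linarith
    · have e1 : a h2 + μ * c h2 ≤ R1 := le_csSup b1 ⟨h2, h2m, rfl⟩
      have e2 : a h1 - μ * c h1 ≤ R2 := le_csSup b2 ⟨h1, h1m, rfl⟩
      rw [abs_of_nonpos (by linarith), neg_sub, mul_sub] at hd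
      linarith
  rw [← le_sub_iff_add_le]
  refine csSup_le (hH.image _) ?_
  rintro _ ⟨h1, h1m, rfl⟩
  rw [le_sub_iff_add_le, add_comm, ← le_sub_iff_add_le]
  refine csSup_le (hH.image _) ?_
  rintro _ ⟨h2, h2m, rfl⟩
  rw [le_sub_iff_add_le]
  show a h2 - Φ (c h2) + (a h1 + Φ (c h1)) ≤ R1 + R2
  linarith [key h1 h1m h2 h2m]

lemma sSup_mul_image (c : ℝ) (hc : 0 < c) (S : Set ℝ) (hS : S.Nonempty) (hb : BddAbove S) :
    sSup ((fun y => c * y) '' S) = c * sSup S := by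
  apply le_antisymm
  · refine csSup_le (hS.image _) ?_
    rintro _ ⟨y, hy, rfl⟩
    exact mul_le_mul_of_nonneg_left (le_csSup hb hy) hc.le
  · obtain ⟨B, hB⟩ := hb
    have hbi : BddAbove ((fun y => c * y) '' S) := by
      refine ⟨c * B, ?_⟩
      rintro _ ⟨y, hy, rfl⟩
      exact mul_le_mul_of_nonneg_left (hB hy) hc.le
    rw [mul_comm, ← le_div_iff₀ hc]
    refine csSup_le hS fun y hy => ?_
    rw [le_div_iff₀ hc, mul_comm]
    exact le_csSup hbi ⟨y, hy, rfl⟩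

/-- Talagrand-type contraction lemma for Rademacher averages (expectation over
all `2^m` sign vectors, written as a normalized sum). -/
theorem contraction_lemma {X : Type*} (H : Set (X → ℝ)) (hH : H.Nonempty)
    (m : ℕ) (hm : 0 < m) (Ψ : Fin m → ℝ → ℝ) (μ : ℝ) (hμ : 0 < μ)
    (hLip : ∀ i, ∀ s t : ℝ, |Ψ i s - Ψ i t| ≤ μ * |s - t|)
    (x : Fin m → X)
    (hbdd1 : ∀ σ : Fin m → Bool,
      BddAbove ((fun h => (1 / (m : ℝ)) * ∑ i, radSign (σ i) * Ψ i (h (x i))) '' H))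
    (hbdd2 : ∀ σ : Fin m → Bool,
      BddAbove ((fun h => ∑ i, radSign (σ i) * h (x i)) '' H)) :
    (1 / 2 ^ m : ℝ) * ∑ σ : Fin m → Bool,
        sSup ((fun h => (1 / (m : ℝ)) * ∑ i, radSign (σ i) * Ψ i (h (x i))) '' H)
      ≤ (μ / (m : ℝ)) * ((1 / 2 ^ m : ℝ) * ∑ σ : Fin m → Bool,
        sSup ((fun h => ∑ i, radSign (σ i) * h (x i)) '' H)) := by
  classical
  set G : Finset (Fin m) → (Fin m → Bool) → (X → ℝ) → ℝ := fun A σ h =>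
    ∑ i, radSign (σ i) * (if i ∈ A then μ * h (x i) else Ψ i (h (x i))) with hG
  -- a uniform bound on ∑ |h (x i)|
  have hne : (Finset.univ : Finset (Fin m → Bool)).Nonempty := univ_nonempty
  set M : ℝ := Finset.univ.sup' hne (fun τ : Fin m → Bool =>
    sSup ((fun h => ∑ i, radSign (τ i) * h (x i)) '' H)) with hM
  have habs : ∀ h ∈ H, ∑ i, |h (x i)| ≤ M := by
    intro h hmem
    set τ : Fin m → Bool := fun i => decide (0 ≤ h (x i)) with hτ
    have e : ∑ i, |h (x i)| = ∑ i, radSign (τ i) * h (x i) := by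
      refine Finset.sum_congr rfl fun i _ => ?_
      by_cases hp : 0 ≤ h (x i)
      · simp [τ, hp, radSign, abs_of_nonneg hp]
      · simp [τ, hp, radSign, abs_of_neg (lt_of_not_ge hp)]
    rw [e]
    calc ∑ i, radSign (τ i) * h (x i)
        ≤ sSup ((fun h => ∑ i, radSign (τ i) * h (x i)) '' H) :=
          le_csSup (hbdd2 τ) ⟨h, hmem, rfl⟩
      _ ≤ M := Finset.le_sup' (fun τ : Fin m → Bool => sSup ((fun h => ∑ i, radSign (τ i) * h (x i)) '' H)) (mem_univ τ)
  -- all hybrid sets are bounded above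
  have bddG : ∀ (A : Finset (Fin m)) (σ : Fin m → Bool), BddAbove ((G A σ) '' H) := by
    intro A σ
    refine ⟨(∑ i, |Ψ i 0|) + μ * M, ?_⟩
    rintro _ ⟨h, hmem, rfl⟩
    have hterm : ∀ i : Fin m, radSign (σ i) * (if i ∈ A then μ * h (x i) else Ψ i (h (x i)))
        ≤ |Ψ i 0| + μ * |h (x i)| := by
      intro i
      have h1 : radSign (σ i) * (if i ∈ A then μ * h (x i) else Ψ i (h (x i)))
          ≤ |radSign (σ i) * (if i ∈ A then μ * h (x i) else Ψ i (h (x i)))| := le_abs_self _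
      rw [abs_mul, abs_radSign, one_mul] at h1
      refine h1.trans ?_
      by_cases hiA : i ∈ A
      · rw [if_pos hiA, abs_mul, abs_of_pos hμ]
        have := abs_nonneg (Ψ i 0); linarith
      · rw [if_neg hiA]
        have h2 : |Ψ i (h (x i)) - Ψ i 0| ≤ μ * |h (x i) - 0| := hLip i _ _
        rw [sub_zero] at h2
        have h3 : |Ψ i (h (x i))| - |Ψ i 0| ≤ |Ψ i (h (x i)) - Ψ i 0| :=
          abs_sub_abs_le_abs_sub _ _
        linarith
    have : G A σ h ≤ ∑ i, (|Ψ i 0| + μ * |h (x i)|) :=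
      Finset.sum_le_sum fun i _ => hterm i
    rw [Finset.sum_add_distrib, ← Finset.mul_sum] at this
    have h4 := habs h hmem
    have : G A σ h ≤ (∑ i, |Ψ i 0|) + μ * M := by nlinarith
    exact this
  -- the one-coordinate replacement step
  have step : ∀ (A : Finset (Fin m)) (j : Fin m), j ∉ A →
      (∑ σ : Fin m → Bool, sSup ((G A σ) '' H))
        ≤ ∑ σ : Fin m → Bool, sSup ((G (insert j A) σ) '' H) := by
    intro A j hj
    set A' := insert j A with hA'
    set flip : (Fin m → Bool) → (Fin m → Bool) := fun σ => Function.update σ j (!σ j) with hflip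
    have hflipj : ∀ σ, flip σ j = !σ j := by intro σ; simp [flip]
    have hflipne : ∀ σ (i : Fin m), i ≠ j → flip σ i = σ i := by
      intro σ i hij; simp [flip, Function.update_of_ne hij]
    have hflipinv : Function.Involutive flip := by
      intro σ; funext i
      by_cases hij : i = j
      · subst hij; simp [flip]
      · simp [flip, Function.update_of_ne hij]
    have pt : ∀ σ : Fin m → Bool, sSup ((G A σ) '' H) + sSup ((G A (flip σ)) '' H)
        ≤ sSup ((G A' σ) '' H) + sSup ((G A' (flip σ)) '' H) := by
      intro σ
      set a : (X → ℝ) → ℝ := fun h => ∑ i ∈ Finset.univ.erase j,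
        radSign (σ i) * (if i ∈ A then μ * h (x i) else Ψ i (h (x i))) with ha
      set c : (X → ℝ) → ℝ := fun h => h (x j) with hc
      have eraseA' : ∀ h : X → ℝ, ∀ i ∈ Finset.univ.erase j,
          radSign (σ i) * (if i ∈ A' then μ * h (x i) else Ψ i (h (x i)))
            = radSign (σ i) * (if i ∈ A then μ * h (x i) else Ψ i (h (x i))) := by
        intro h i hi
        have hij : i ≠ j := Finset.ne_of_mem_erase hi
        have : i ∈ A' ↔ i ∈ A := by
          rw [hA', Finset.mem_insert]
          exact ⟨fun hh => hh.resolve_left hij, Or.inr⟩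
        simp [this]
      have eraseflip : ∀ (B : Finset (Fin m)) (h : X → ℝ),
          (∑ i ∈ Finset.univ.erase j,
            radSign (flip σ i) * (if i ∈ B then μ * h (x i) else Ψ i (h (x i))))
          = ∑ i ∈ Finset.univ.erase j,
            radSign (σ i) * (if i ∈ B then μ * h (x i) else Ψ i (h (x i))) := by
        intro B h
        refine Finset.sum_congr rfl fun i hi => ?_
        rw [hflipne σ i (Finset.ne_of_mem_erase hi)]
      have dA : ∀ h : X → ℝ, G A σ h = radSign (σ j) * Ψ j (c h) + a h := by
        intro h
        simp only [hG]
        rw [← Finset.add_sum_erase Finset.univ _ (Finset.mem_univ j), if_neg hj]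
      have dAf : ∀ h : X → ℝ, G A (flip σ) h = - radSign (σ j) * Ψ j (c h) + a h := by
        intro h
        simp only [hG]
        rw [← Finset.add_sum_erase Finset.univ _ (Finset.mem_univ j), if_neg hj,
          hflipj, radSign_not, eraseflip]
      have hjA' : j ∈ A' := Finset.mem_insert_self j A
      have dA' : ∀ h : X → ℝ, G A' σ h = radSign (σ j) * (μ * c h) + a h := by
        intro h
        simp only [hG]
        rw [← Finset.add_sum_erase Finset.univ _ (Finset.mem_univ j), if_pos hjA',
          Finset.sum_congr rfl (eraseA' h)]
      have dA'f : ∀ h : X → ℝ, G A' (flip σ) h = - radSign (σ j) * (μ * c h) + a h := by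
        intro h
        simp only [hG]
        rw [← Finset.add_sum_erase Finset.univ _ (Finset.mem_univ j), if_pos hjA',
          hflipj, radSign_not, eraseflip, Finset.sum_congr rfl (eraseA' h)]
      have bp : BddAbove ((fun h => a h + μ * c h) '' H) := by
        rcases Bool.eq_false_or_eq_true (σ j) with hb | hb
        · have : (fun h => a h + μ * c h) '' H = (G A' σ) '' H := by
            refine Set.image_congr' fun h => ?_
            rw [dA' h, hb]; simp [radSign]; ring
          rw [this]; exact bddG A' σ
        · have : (fun h => a h + μ * c h) '' H = (G A' (flip σ)) '' H := by
            refine Set.image_congr' fun h => ?_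
            rw [dA'f h, hb]; simp [radSign]; ring
          rw [this]; exact bddG A' (flip σ)
      have bm : BddAbove ((fun h => a h - μ * c h) '' H) := by
        rcases Bool.eq_false_or_eq_true (σ j) with hb | hb
        · have : (fun h => a h - μ * c h) '' H = (G A' (flip σ)) '' H := by
            refine Set.image_congr' fun h => ?_
            rw [dA'f h, hb]; simp [radSign]; ring
          rw [this]; exact bddG A' (flip σ)
        · have : (fun h => a h - μ * c h) '' H = (G A' σ) '' H := by
            refine Set.image_congr' fun h => ?_
            rw [dA' h, hb]; simp [radSign]; ring
          rw [this]; exact bddG A' σ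
      have core := core_ineq H hH a c (Ψ j) μ (hLip j) bp bm
      rcases Bool.eq_false_or_eq_true (σ j) with hb | hb
      · have e1 : (G A σ) '' H = (fun h => a h + Ψ j (c h)) '' H := by
          refine Set.image_congr' fun h => ?_
          rw [dA h, hb]; simp [radSign]; ring
        have e2 : (G A (flip σ)) '' H = (fun h => a h - Ψ j (c h)) '' H := by
          refine Set.image_congr' fun h => ?_
          rw [dAf h, hb]; simp [radSign]; ring
        have e3 : (G A' σ) '' H = (fun h => a h + μ * c h) '' H := by
          refine Set.image_congr' fun h => ?_
          rw [dA' h, hb]; simp [radSign]; ring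
        have e4 : (G A' (flip σ)) '' H = (fun h => a h - μ * c h) '' H := by
          refine Set.image_congr' fun h => ?_
          rw [dA'f h, hb]; simp [radSign]; ring
        rw [e1, e2, e3, e4]; linarith
      · have e1 : (G A σ) '' H = (fun h => a h - Ψ j (c h)) '' H := by
          refine Set.image_congr' fun h => ?_
          rw [dA h, hb]; simp [radSign]; ring
        have e2 : (G A (flip σ)) '' H = (fun h => a h + Ψ j (c h)) '' H := by
          refine Set.image_congr' fun h => ?_
          rw [dAf h, hb]; simp [radSign]; ring
        have e3 : (G A' σ) '' H = (fun h => a h - μ * c h) '' H := by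
          refine Set.image_congr' fun h => ?_
          rw [dA' h, hb]; simp [radSign]; ring
        have e4 : (G A' (flip σ)) '' H = (fun h => a h + μ * c h) '' H := by
          refine Set.image_congr' fun h => ?_
          rw [dA'f h, hb]; simp [radSign]; ring
        rw [e1, e2, e3, e4]; linarith
    have reidx : ∀ (g : (Fin m → Bool) → ℝ), (∑ σ : Fin m → Bool, g (flip σ)) = ∑ σ : Fin m → Bool, g σ :=
      fun g => Fintype.sum_bijective flip hflipinv.bijective _ _ (fun σ => rfl)
    have two : ∀ (B : Finset (Fin m)),
        (2:ℝ) * ∑ σ : Fin m → Bool, sSup ((G B σ) '' H)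
          = ∑ σ : Fin m → Bool, (sSup ((G B σ) '' H) + sSup ((G B (flip σ)) '' H)) := by
      intro B
      rw [Finset.sum_add_distrib, reidx (fun σ => sSup ((G B σ) '' H))]
      ring
    have hsum := Finset.sum_le_sum (fun (σ : Fin m → Bool) (_ : σ ∈ Finset.univ) => pt σ)
    have t1 := two A
    have t2 := two A'
    linarith
  -- iterate the step to go from ∅ to univ
  have Tle : ∀ s : Finset (Fin m), (∑ σ : Fin m → Bool, sSup ((G sᶜ σ) '' H))
      ≤ ∑ σ : Fin m → Bool, sSup ((G Finset.univ σ) '' H) := by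
    intro s
    induction s using Finset.induction_on with
    | empty => simp
    | @insert a s ha ih =>
      rw [Finset.compl_insert]
      have h2 := step (sᶜ.erase a) a (Finset.notMem_erase a _)
      rw [Finset.insert_erase (Finset.mem_compl.mpr ha)] at h2
      exact h2.trans ih
  have key : (∑ σ : Fin m → Bool, sSup ((G ∅ σ) '' H))
      ≤ ∑ σ : Fin m → Bool, sSup ((G Finset.univ σ) '' H) := by
    simpa using Tle Finset.univ
  -- final algebra
  have hmpos : (0:ℝ) < (m:ℝ) := Nat.cast_pos.mpr hm
  have eΨ : ∀ σ : Fin m → Bool,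
      sSup ((fun h => (1 / (m : ℝ)) * ∑ i, radSign (σ i) * Ψ i (h (x i))) '' H)
        = (1/(m:ℝ)) * sSup ((G ∅ σ) '' H) := by
    intro σ
    have hfeq : (G ∅ σ) '' H = (fun h => ∑ i, radSign (σ i) * Ψ i (h (x i))) '' H := by
      refine Set.image_congr' fun h => ?_
      rw [hG]; simp
    have himg : (fun h => (1 / (m : ℝ)) * ∑ i, radSign (σ i) * Ψ i (h (x i))) '' H
        = (fun y => (1/(m:ℝ)) * y) '' ((fun h => ∑ i, radSign (σ i) * Ψ i (h (x i))) '' H) := by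
      rw [Set.image_image]
    rw [himg, hfeq, sSup_mul_image _ (by positivity) _ (hH.image _) (by rw [← hfeq]; exact bddG ∅ σ)]
  have elin : ∀ σ : Fin m → Bool,
      sSup ((G Finset.univ σ) '' H)
        = μ * sSup ((fun h => ∑ i, radSign (σ i) * h (x i)) '' H) := by
    intro σ
    have hfeq : (G Finset.univ σ) '' H
        = (fun y => μ * y) '' ((fun h => ∑ i, radSign (σ i) * h (x i)) '' H) := by
      rw [Set.image_image]
      refine Set.image_congr' fun h => ?_
      simp only [hG]
      simp only [Finset.mem_univ, if_true]
      rw [Finset.mul_sum]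
      exact Finset.sum_congr rfl fun i _ => by ring
    rw [hfeq, sSup_mul_image _ hμ _ (hH.image _) (hbdd2 σ)]
  have eL : (∑ σ : Fin m → Bool,
      sSup ((fun h => (1 / (m : ℝ)) * ∑ i, radSign (σ i) * Ψ i (h (x i))) '' H))
        = (1/(m:ℝ)) * ∑ σ : Fin m → Bool, sSup ((G ∅ σ) '' H) := by
    rw [Finset.mul_sum]
    exact Finset.sum_congr rfl fun σ _ => eΨ σ
  have eR : (∑ σ : Fin m → Bool, sSup ((G Finset.univ σ) '' H))
      = μ * ∑ σ : Fin m → Bool, sSup ((fun h => ∑ i, radSign (σ i) * h (x i)) '' H) := by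
    rw [Finset.mul_sum]
    exact Finset.sum_congr rfl fun σ _ => elin σ
  rw [eL]
  rw [eR] at key
  set T0 := ∑ σ : Fin m → Bool, sSup ((G ∅ σ) '' H) with hT0
  set S := ∑ σ : Fin m → Bool, sSup ((fun h => ∑ i, radSign (σ i) * h (x i)) '' H) with hS
  have h2pos : (0:ℝ) < 2 ^ m := by positivity
  have hmono := mul_le_mul_of_nonneg_left key (by positivity : (0:ℝ) ≤ 1/(2^m * (m:ℝ)))
  calc (1 / 2 ^ m : ℝ) * ((1/(m:ℝ)) * T0) = (1/(2^m * (m:ℝ))) * T0 := by ring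
    _ ≤ (1/(2^m * (m:ℝ))) * (μ * S) := hmono
    _ = (μ / (m:ℝ)) * ((1 / 2 ^ m : ℝ) * S) := by
        ring
end

section
/- (Minimizer at a bid) Let V_1, ..., V_m be v-functions with data b_1, ..., b_m (each b_i = (b1_i, b2_i)). Then the problem min_{r ≥ 0} F(r) := ∑_{i=1}^m V_i(r, b_i) admits a solution r* with r* = b1_i for some i ∈ {1, ..., m}. -/
/-!
Each `v`-function is concave (indeed a minimum of two affine functions) on either side of its
highest bid `b1`, antitone to its left and monotone to its right. Hence the sum `F` is concave
between any two consecutive bids, antitone before the smallest and monotone after the largest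
one. By the minimum principle for concave functions, every value of `F` is bounded below by the
value at a bid, so the best bid is a global minimizer.
-/

open Finset

/-- A `v`-function with parameters `η`, `a3` and bids `(b1, b2)`. -/
noncomputable def vfun (η a3 b1 b2 r : ℝ) : ℝ :=
  if r ≤ b2 then -(η * a3 * b2)
  else if r ≤ b1 then -(η * a3 * r)
  else if r < (1 + η) * b1 then a3 * r - a3 * (1 + η) * b1
  else 0

open Set

lemma concaveOn_mul_add {s : Set ℝ} (hs : Convex ℝ s) (a c : ℝ) :
    ConcaveOn ℝ s fun x => a * x + c :=
  ((LinearMap.mul ℝ ℝ a).concaveOn hs).add_const c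

lemma concaveOn_finset_sum {ι : Type*} {t : Finset ι} {s : Set ℝ} {f : ι → ℝ → ℝ}
    (hs : Convex ℝ s) (hf : ∀ i ∈ t, ConcaveOn ℝ s (f i)) :
    ConcaveOn ℝ s fun x => ∑ i ∈ t, f i x := by
  classical
  induction t using Finset.induction_on with
  | empty => simpa using concaveOn_const 0 hs
  | insert a t ha ih =>
    simp_rw [sum_insert ha]
    exact (hf a (mem_insert_self a t)).add (ih fun i hi => hf i (mem_insert_of_mem hi))

section vfun

variable {η a3 b1 b2 : ℝ}

lemma vfun_eq_min_of_le_bid (hη : 0 ≤ η) (ha3 : 0 ≤ a3) {x : ℝ} (hx : x ≤ b1) :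
    vfun η a3 b1 b2 x = min (-(η * a3 * b2)) (-(η * a3 * x)) := by
  have hk : 0 ≤ η * a3 := mul_nonneg hη ha3
  unfold vfun
  split_ifs with hxb2
  · rw [min_eq_left (neg_le_neg (mul_le_mul_of_nonneg_left hxb2 hk))]
  · rw [min_eq_right (neg_le_neg (mul_le_mul_of_nonneg_left (not_le.1 hxb2).le hk))]

lemma vfun_eq_min_of_bid_le (hη : 0 ≤ η) (ha3 : 0 ≤ a3) (hb1 : 0 ≤ b1) (hle : b2 ≤ b1)
    {x : ℝ} (hx : b1 ≤ x) :
    vfun η a3 b1 b2 x = min (a3 * x - a3 * (1 + η) * b1) 0 := by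
  have hk : 0 ≤ η * a3 * b1 := by positivity
  unfold vfun
  split_ifs with h1 h2 h3
  · obtain rfl : x = b1 := le_antisymm (h1.trans hle) hx
    obtain rfl : b2 = x := le_antisymm hle h1
    rw [min_eq_left (by nlinarith)]; ring
  · obtain rfl : x = b1 := le_antisymm h2 hx
    rw [min_eq_left (by nlinarith)]; ring
  · rw [min_eq_left (by nlinarith)]
  · rw [min_eq_right (by nlinarith)]

lemma concaveOn_vfun_Iic (hη : 0 ≤ η) (ha3 : 0 ≤ a3) :
    ConcaveOn ℝ (Iic b1) (vfun η a3 b1 b2) :=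
  ((concaveOn_const (-(η * a3 * b2)) (convex_Iic b1)).inf
    (concaveOn_mul_add (convex_Iic b1) (-(η * a3)) 0)).congr
    fun x hx => by simp [vfun_eq_min_of_le_bid hη ha3 hx]

lemma concaveOn_vfun_Ici (hη : 0 ≤ η) (ha3 : 0 ≤ a3) (hb1 : 0 ≤ b1) (hle : b2 ≤ b1) :
    ConcaveOn ℝ (Ici b1) (vfun η a3 b1 b2) :=
  ((concaveOn_mul_add (convex_Ici b1) a3 (-(a3 * (1 + η) * b1))).inf
    (concaveOn_const 0 (convex_Ici b1))).congr
    fun x hx => by simp [vfun_eq_min_of_bid_le hη ha3 hb1 hle hx, sub_eq_add_neg]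

lemma concaveOn_vfun_Icc (hη : 0 ≤ η) (ha3 : 0 ≤ a3) (hb1 : 0 ≤ b1) (hle : b2 ≤ b1)
    {a b : ℝ} (hab : b1 ∉ Ioo a b) : ConcaveOn ℝ (Icc a b) (vfun η a3 b1 b2) := by
  rcases not_and_or.1 hab with h | h
  · exact (concaveOn_vfun_Ici hη ha3 hb1 hle).subset
      (Icc_subset_Ici_self.trans (Ici_subset_Ici.2 (not_lt.1 h))) (convex_Icc a b)
  · exact (concaveOn_vfun_Iic hη ha3).subset
      (Icc_subset_Iic_self.trans (Iic_subset_Iic.2 (not_lt.1 h))) (convex_Icc a b)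

lemma antitoneOn_vfun_Iic (hη : 0 ≤ η) (ha3 : 0 ≤ a3) :
    AntitoneOn (vfun η a3 b1 b2) (Iic b1) := fun x hx y hy hxy => by
  rw [vfun_eq_min_of_le_bid hη ha3 hx, vfun_eq_min_of_le_bid hη ha3 hy]
  gcongr

lemma monotoneOn_vfun_Ici (hη : 0 ≤ η) (ha3 : 0 ≤ a3) (hb1 : 0 ≤ b1) (hle : b2 ≤ b1) :
    MonotoneOn (vfun η a3 b1 b2) (Ici b1) := fun x hx y hy hxy => by
  rw [vfun_eq_min_of_bid_le hη ha3 hb1 hle hx, vfun_eq_min_of_bid_le hη ha3 hb1 hle hy]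
  gcongr

end vfun

lemma exists_mem_le_of_concaveOn_gaps {s : Finset ℝ} (hs : s.Nonempty) {f : ℝ → ℝ}
    (hconc : ∀ a ∈ s, ∀ b ∈ s, (∀ x ∈ s, x ∉ Ioo a b) → ConcaveOn ℝ (Icc a b) f)
    (hanti : AntitoneOn f (Iic (s.min' hs))) (hmono : MonotoneOn f (Ici (s.max' hs))) (r : ℝ) :
    ∃ x ∈ s, f x ≤ f r := by
  by_cases hlo : r ≤ s.min' hs
  · exact ⟨_, s.min'_mem hs, hanti hlo self_mem_Iic hlo⟩
  by_cases hhi : s.max' hs ≤ r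
  · exact ⟨_, s.max'_mem hs, hmono self_mem_Ici hhi hhi⟩
  rw [not_le] at hlo hhi
  have hL : (s.filter (· ≤ r)).Nonempty := ⟨s.min' hs, mem_filter.2 ⟨s.min'_mem hs, hlo.le⟩⟩
  have hU : (s.filter (r ≤ ·)).Nonempty := ⟨s.max' hs, mem_filter.2 ⟨s.max'_mem hs, hhi.le⟩⟩
  obtain ⟨hLs, hLr⟩ := mem_filter.1 ((s.filter (· ≤ r)).max'_mem hL)
  obtain ⟨hUs, hrU⟩ := mem_filter.1 ((s.filter (r ≤ ·)).min'_mem hU)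
  set L := (s.filter (· ≤ r)).max' hL
  set U := (s.filter (r ≤ ·)).min' hU
  have hgap : ∀ x ∈ s, x ∉ Ioo L U := by
    rintro x hx ⟨hLx, hxU⟩
    rcases le_total x r with h | h
    · exact hLx.not_ge (le_max' _ x (mem_filter.2 ⟨hx, h⟩))
    · exact hxU.not_ge (min'_le _ x (mem_filter.2 ⟨hx, h⟩))
  have hLU : L ≤ U := hLr.trans hrU
  rcases min_le_iff.1 ((hconc L hLs U hUs hgap).min_le_of_mem_Icc (left_mem_Icc.2 hLU)
      (right_mem_Icc.2 hLU) ⟨hLr, hrU⟩) with h | h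
  exacts [⟨L, hLs, h⟩, ⟨U, hUs, h⟩]

lemma exists_mem_forall_le_of_concaveOn_gaps {s : Finset ℝ} (hs : s.Nonempty) {f : ℝ → ℝ}
    (hconc : ∀ a ∈ s, ∀ b ∈ s, (∀ x ∈ s, x ∉ Ioo a b) → ConcaveOn ℝ (Icc a b) f)
    (hanti : AntitoneOn f (Iic (s.min' hs))) (hmono : MonotoneOn f (Ici (s.max' hs))) :
    ∃ x ∈ s, ∀ r, f x ≤ f r := by
  obtain ⟨x, hx, hmin⟩ := s.exists_min_image f hs
  refine ⟨x, hx, fun r => ?_⟩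
  obtain ⟨y, hy, hyr⟩ := exists_mem_le_of_concaveOn_gaps hs hconc hanti hmono r
  exact (hmin y hy).trans hyr

/-- A sum of `v`-functions attains its minimum over `ℝ≥0` at one of the highest bids. -/
theorem sum_vfun_minimizer_at_bid (m : ℕ) (hm : 0 < m)
    (η a3 b1 b2 : Fin m → ℝ)
    (hη : ∀ i, 0 < η i) (ha3 : ∀ i, 0 < a3 i)
    (h0 : ∀ i, 0 ≤ b2 i) (hle : ∀ i, b2 i ≤ b1 i) :
    ∃ i : Fin m, ∀ r ∈ Set.Ici (0 : ℝ),
      (∑ j, vfun (η j) (a3 j) (b1 j) (b2 j) (b1 i))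
        ≤ ∑ j, vfun (η j) (a3 j) (b1 j) (b2 j) r := by
  have hb1 i : 0 ≤ b1 i := (h0 i).trans (hle i)
  set s := Finset.univ.image b1
  have hs : s.Nonempty := univ_nonempty_iff.2 ⟨⟨0, hm⟩⟩ |>.image b1
  have hbid j : b1 j ∈ s := mem_image_of_mem b1 (mem_univ j)
  obtain ⟨x, hx, hmin⟩ := exists_mem_forall_le_of_concaveOn_gaps hs
    (f := fun r => ∑ j, vfun (η j) (a3 j) (b1 j) (b2 j) r)
    (fun a _ b _ hgap => concaveOn_finset_sum (convex_Icc a b) fun j _ =>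
      concaveOn_vfun_Icc (hη j).le (ha3 j).le (hb1 j) (hle j) (hgap _ (hbid j)))
    (fun x hx y hy hxy => sum_le_sum fun j _ =>
      have hj := s.min'_le _ (hbid j)
      antitoneOn_vfun_Iic (hη j).le (ha3 j).le (hx.trans hj) (hy.trans hj) hxy)
    (fun x hx y hy hxy => sum_le_sum fun j _ =>
      have hj := s.le_max' _ (hbid j)
      monotoneOn_vfun_Ici (hη j).le (ha3 j).le (hb1 j) (hle j) (hj.trans hx) (hj.trans hy) hxy)
  obtain ⟨i, -, rfl⟩ := mem_image.1 hx
  exact ⟨i, fun r _ => hmin r⟩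
end

section
/- The surrogate L_γ decomposes as a difference of convex functions: L_γ(r, b) = u(r, b) - v(r, b) where u(r, b) = -r·1{r < b1} + ((r - (1+γ)b1)/γ)·1{r ≥ b1} and v(r, b) = (-r + b2)·1{r < b2} + ((r - (1+γ)b1)/γ)·1{r > (1+γ)b1}, and both u(·, b) and v(·, b) are convex in r. -/
/-- The surrogate loss `L_γ`. -/
noncomputable def Lgamma (γ r b1 b2 : ℝ) : ℝ :=
  if r ≤ b2 then -b2
  else if r ≤ b1 then -r
  else if r ≤ (1 + γ) * b1 then (r - (1 + γ) * b1) / γ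
  else 0

/-- `u(r, b) = -r·1{r < b1} + ((r - (1+γ)b1)/γ)·1{r ≥ b1}`. -/
noncomputable def uDC (γ r b1 b2 : ℝ) : ℝ :=
  if r < b1 then -r else (r - (1 + γ) * b1) / γ

/-- `v(r, b) = (-r + b2)·1{r < b2} + ((r - (1+γ)b1)/γ)·1{r > (1+γ)b1}`. -/
noncomputable def vDC (γ r b1 b2 : ℝ) : ℝ :=
  if r < b2 then -r + b2 else if (1 + γ) * b1 < r then (r - (1 + γ) * b1) / γ else 0

/-! Both `u` and `v` are maxima of affine functions of `r`, hence convex: the two pieces of `u`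
cross at `r = b1`, and the outer pieces of `v` cross its zero piece at `r = b2` and
`r = (1 + γ) b1`. Since `b2 ≤ b1 ≤ (1 + γ) b1`, the identity `L_γ = u - v` is then checked region
by region between these breakpoints. -/

open Set

lemma convexOn_univ_affine (a c : ℝ) : ConvexOn ℝ univ fun r : ℝ => a * r + c :=
  ((LinearMap.mul ℝ ℝ a).convexOn convex_univ).add_const c

section

variable {γ b1 b2 : ℝ}

lemma uDC_eq_max (hγ : 0 < γ) (r : ℝ) :
    uDC γ r b1 b2 = max (-r) ((r - (1 + γ) * b1) / γ) := by
  unfold uDC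
  split_ifs
  · refine (max_eq_left ?_).symm
    rw [div_le_iff₀ hγ]
    nlinarith
  · refine (max_eq_right ?_).symm
    rw [le_div_iff₀ hγ]
    nlinarith

lemma vDC_eq_max (hγ : 0 < γ) (hb : b2 ≤ (1 + γ) * b1) (r : ℝ) :
    vDC γ r b1 b2 = max (max (-r + b2) 0) ((r - (1 + γ) * b1) / γ) := by
  have hneg : (r - (1 + γ) * b1) / γ ≤ 0 ↔ r ≤ (1 + γ) * b1 := by
    rw [div_le_iff₀ hγ, zero_mul, sub_nonpos]
  unfold vDC
  split_ifs with h₂ h₁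
  · rw [max_eq_left (by linarith : (0 : ℝ) ≤ -r + b2),
      max_eq_left ((hneg.2 (by linarith)).trans (by linarith))]
  · have hpos : 0 < (r - (1 + γ) * b1) / γ := not_le.1 (mt hneg.1 (not_le.2 h₁))
    rw [max_eq_right (max_le (by linarith) hpos.le)]
  · rw [max_eq_right (by linarith : -r + b2 ≤ 0), max_eq_left (hneg.2 (not_lt.1 h₁))]

lemma convexOn_uDC (hγ : 0 < γ) : ConvexOn ℝ univ fun r => uDC γ r b1 b2 := by
  refine ((convexOn_univ_affine (-1) 0).sup
    (convexOn_univ_affine γ⁻¹ (-((1 + γ) * b1 / γ)))).congr fun r _ => ?_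
  rw [uDC_eq_max hγ, Pi.sup_apply]
  congr 1 <;> ring

lemma convexOn_vDC (hγ : 0 < γ) (hb : b2 ≤ (1 + γ) * b1) :
    ConvexOn ℝ univ fun r => vDC γ r b1 b2 := by
  refine (((convexOn_univ_affine (-1) b2).sup (convexOn_univ_affine 0 0)).sup
    (convexOn_univ_affine γ⁻¹ (-((1 + γ) * b1 / γ)))).congr fun r _ => ?_
  rw [vDC_eq_max hγ hb, Pi.sup_apply, Pi.sup_apply]
  congr 2 <;> ring

lemma Lgamma_eq_uDC_sub_vDC (hγ : γ ≠ 0) (hle : b2 ≤ b1) (hb1 : b1 ≤ (1 + γ) * b1) (r : ℝ) :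
    Lgamma γ r b1 b2 = uDC γ r b1 b2 - vDC γ r b1 b2 := by
  unfold Lgamma uDC vDC
  have hcross : (b1 - (1 + γ) * b1) / γ = -b1 := by field_simp; ring
  split_ifs <;> first | linarith | (obtain rfl : r = b1 := by linarith); linarith

end

theorem dc_decomposition (γ b1 b2 : ℝ) (hγ : 0 < γ) (h0 : 0 ≤ b2) (hle : b2 ≤ b1) :
    (∀ r : ℝ, Lgamma γ r b1 b2 = uDC γ r b1 b2 - vDC γ r b1 b2) ∧
    ConvexOn ℝ Set.univ (fun r => uDC γ r b1 b2) ∧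
    ConvexOn ℝ Set.univ (fun r => vDC γ r b1 b2) := by
  have hb1 : b1 ≤ (1 + γ) * b1 := le_mul_of_one_le_left (h0.trans hle) (by linarith)
  exact ⟨Lgamma_eq_uDC_sub_vDC hγ.ne' hle hb1, convexOn_uDC hγ, convexOn_vDC hγ (hle.trans hb1)⟩
end
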